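/- Let X be a separable complex Banach space. The spectrum map σ : L(X) → K(D), T ↦ {λ ∈ D : T − λI not invertible}, is Borel measurable when L(X) carries the strong operator topology and K(D) the Vietoris (Hausdorff) topology. Equivalently, for every open V ⊆ D, the set E_V = {T ∈ L(X) : σ(T) ∩ V ≠ ∅} is Borel in (L(X), SOT). -/

import Mathlib

/-!
A scalar `λ` lies outside `σ(T)` exactly when `λ - T` is bounded below and has dense range. For
fixed `λ` and a fixed lower bound, both conditions are Borel in the strong operator topology: the
first is closed, the second is `G_δ` because `X` is separable. A compact `K` misses `σ(T)` iff for
some `n` every point `λ` of a countable dense subset of `K` makes `λ - T` bounded below by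
`1/(n+1)` with dense range: the resolvent is bounded on `K` by continuity, and conversely the
resolvent set contains the disc of radius `‖R(λ)‖⁻¹` around `λ`. So `{T | σ(T) ∩ K ≠ ∅}` is Borel
for compact, hence for σ-compact `K`, such as `D ∩ U` with `U` open. As the Vietoris topology on
`K(D)` is second countable, the preimages of its subbasic sets `{K | K ∩ U ≠ ∅}` and
`{K | K ⊆ U}`, the latter being the complement of `{T | σ(T) ∩ (D \ U) ≠ ∅}`, decide
measurability.
-/


open Metric

/-- `K(D)`: the compact subsets of the closed unit disc `D ⊆ ℂ`. -/
abbrev KD : Type := { K : Set ℂ // IsCompact K ∧ K ⊆ closedBall (0 : ℂ) 1 }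

/-- The Vietoris topology on `K(D)`. -/
def vietoris : TopologicalSpace KD :=
  TopologicalSpace.generateFrom
    ({s : Set KD | ∃ U : Set ℂ, IsOpen U ∧ s = {K : KD | (K : Set ℂ) ⊆ U}} ∪
     {s : Set KD | ∃ U : Set ℂ, IsOpen U ∧ s = {K : KD | ((K : Set ℂ) ∩ U).Nonempty}})

/-- The spectrum restricted to the closed unit disc, as an element of `K(D)`. -/
noncomputable def sigmaD {X : Type*} [NormedAddCommGroup X] [NormedSpace ℂ X]
    [CompleteSpace X] (T : X →L[ℂ] X) : KD :=
  ⟨spectrum ℂ T ∩ closedBall 0 1,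
    (spectrum.isCompact T).inter_right Metric.isClosed_closedBall, Set.inter_subset_right⟩

/-- The strong operator topology on `L(X)`. -/
def SOT (𝕜 X : Type*) [NontriviallyNormedField 𝕜] [NormedAddCommGroup X]
    [NormedSpace 𝕜 X] : TopologicalSpace (X →L[𝕜] X) :=
  TopologicalSpace.induced (fun T => (T : X → X)) Pi.topologicalSpace

open Set Topology

section BoundedBelow

variable {𝕜 X : Type*} [NontriviallyNormedField 𝕜] [NormedAddCommGroup X] [NormedSpace 𝕜 X]

/-- For `c > 0` on a Banach space this says that `S` is invertible with `‖S⁻¹‖ ≤ c⁻¹`; unlike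
invertibility, it is a Borel condition on `S` for the strong operator topology. -/
def BoundedBelowDenseRange (c : ℝ) (S : X →L[𝕜] X) : Prop :=
  (∀ x, c * ‖x‖ ≤ ‖S x‖) ∧ DenseRange S

namespace BoundedBelowDenseRange

variable [CompleteSpace X] {c : ℝ} {S : X →L[𝕜] X}

theorem isUnit (hS : BoundedBelowDenseRange c S) (hc : 0 < c) : IsUnit S := by
  have hanti : AntilipschitzWith ⟨c⁻¹, (inv_pos.2 hc).le⟩ S :=
    S.antilipschitz_of_bound fun x => by
      show ‖x‖ ≤ c⁻¹ * ‖S x‖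
      rw [inv_mul_eq_div, le_div_iff₀ hc, mul_comm]
      exact hS.1 x
  refine ContinuousLinearMap.isUnit_iff_bijective.2 ⟨hanti.injective, ?_⟩
  rw [← range_eq_univ, ← (hanti.isClosed_range S.uniformContinuous).closure_eq]
  exact hS.2.closure_range

theorem norm_ringInverse_le (hS : BoundedBelowDenseRange c S) (hc : 0 < c) :
    ‖Ring.inverse S‖ ≤ c⁻¹ := by
  obtain ⟨u, rfl⟩ := hS.isUnit hc
  rw [Ring.inverse_unit]
  refine ContinuousLinearMap.opNorm_le_bound _ (inv_nonneg.2 hc.le) fun y => ?_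
  have hy := hS.1 ((↑u⁻¹ : X →L[𝕜] X) y)
  rw [show (u : X →L[𝕜] X) ((↑u⁻¹ : X →L[𝕜] X) y) = y from DFunLike.congr_fun u.mul_inv y] at hy
  rwa [inv_mul_eq_div, le_div_iff₀ hc, mul_comm]

end BoundedBelowDenseRange

theorem IsUnit.boundedBelowDenseRange {S : X →L[𝕜] X} (hS : IsUnit S) {M : ℝ} (hM : 0 < M)
    (h : ‖Ring.inverse S‖ ≤ M) : BoundedBelowDenseRange M⁻¹ S := by
  obtain ⟨u, rfl⟩ := hS
  rw [Ring.inverse_unit] at h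
  have hsurj : Function.Surjective (u : X →L[𝕜] X) := fun y =>
    ⟨(↑u⁻¹ : X →L[𝕜] X) y, DFunLike.congr_fun u.mul_inv y⟩
  refine ⟨fun x => ?_, hsurj.denseRange⟩
  have hx : ‖x‖ ≤ M * ‖(u : X →L[𝕜] X) x‖ :=
    calc ‖x‖ = ‖(↑u⁻¹ : X →L[𝕜] X) ((u : X →L[𝕜] X) x)‖ := by
          rw [show (↑u⁻¹ : X →L[𝕜] X) ((u : X →L[𝕜] X) x) = x from
            DFunLike.congr_fun u.inv_mul x]
      _ ≤ ‖(↑u⁻¹ : X →L[𝕜] X)‖ * ‖(u : X →L[𝕜] X) x‖ := ContinuousLinearMap.le_opNorm _ _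
      _ ≤ M * ‖(u : X →L[𝕜] X) x‖ := by gcongr
  rwa [inv_mul_eq_div, div_le_iff₀ hM, mul_comm]

end BoundedBelow

theorem spectrum.mem_resolventSet_of_norm_sub_mul_lt {𝕜 A : Type*} [NontriviallyNormedField 𝕜]
    [NormedRing A] [NormedAlgebra 𝕜 A] [CompleteSpace A] {a : A} {k k' : 𝕜}
    (hk : k ∈ resolventSet 𝕜 a) (h : ‖k' - k‖ * ‖(1 : A)‖ * ‖resolvent a k‖ < 1) :
    k' ∈ resolventSet 𝕜 a := by
  nontriviality A
  set u := hk.unit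
  have hu : (0 : ℝ) < ‖(↑u⁻¹ : A)‖ := Units.norm_pos u⁻¹
  have hnear : ‖(algebraMap 𝕜 A k' - a) - u‖ < ‖(↑u⁻¹ : A)‖⁻¹ := by
    rw [hk.unit_spec, sub_sub_sub_cancel_right, ← map_sub, norm_algebraMap, ← one_div,
      lt_div_iff₀ hu]
    rwa [spectrum.resolvent_eq hk] at h
  exact (u.ofNearby _ hnear).isUnit

namespace ContinuousLinearMap

variable {𝕜 X : Type*} [NontriviallyNormedField 𝕜] [NormedAddCommGroup X] [NormedSpace 𝕜 X]
  [CompleteSpace X]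

theorem disjoint_spectrum_iff_exists_boundedBelowDenseRange {T : X →L[𝕜] X} {K K₀ : Set 𝕜}
    (hK : IsCompact K) (hK₀ : K₀ ⊆ K) (hK₀_dense : K ⊆ closure K₀) :
    Disjoint (spectrum 𝕜 T) K ↔
      ∃ n : ℕ, ∀ μ ∈ K₀, BoundedBelowDenseRange ((n : ℝ) + 1)⁻¹ (algebraMap 𝕜 _ μ - T) := by
  constructor
  · intro hdisj
    have hKρ : K ⊆ resolventSet 𝕜 T := by
      simpa only [spectrum, compl_compl] using hdisj.subset_compl_left
    obtain ⟨C, hC⟩ := hK.exists_bound_of_continuousOn fun μ hμ =>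
      (spectrum.hasDerivAt_resolvent_const_left (hKρ hμ)).continuousAt.continuousWithinAt
    refine ⟨⌈C⌉₊, fun μ hμ => (hKρ (hK₀ hμ)).boundedBelowDenseRange (by positivity) ?_⟩
    calc ‖resolvent T μ‖ ≤ C := hC μ (hK₀ hμ)
      _ ≤ ⌈C⌉₊ := Nat.le_ceil C
      _ ≤ ⌈C⌉₊ + 1 := by linarith
  · rintro ⟨n, hn⟩
    refine Set.disjoint_right.2 fun l hl hlσ => hlσ ?_
    obtain ⟨μ, hμ, hlμ⟩ := Metric.mem_closure_iff.1 (hK₀_dense hl) ((n : ℝ) + 1)⁻¹ (by positivity)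
    have hμn := (hn μ hμ).norm_ringInverse_le (by positivity)
    rw [inv_inv] at hμn
    refine spectrum.mem_resolventSet_of_norm_sub_mul_lt ((hn μ hμ).isUnit (by positivity)) ?_
    calc ‖l - μ‖ * ‖(1 : X →L[𝕜] X)‖ * ‖resolvent T μ‖
        ≤ ‖l - μ‖ * 1 * ((n : ℝ) + 1) := by
          gcongr
          · exact norm_id_le
          · exact hμn
      _ < ((n : ℝ) + 1)⁻¹ * 1 * ((n : ℝ) + 1) := by
          gcongr
          rwa [← dist_eq_norm]
      _ = 1 := by field_simp

end ContinuousLinearMap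

section Measurability

variable {Y : Type*} [TopologicalSpace Y]

theorem isGδ_setOf_denseRange {α E : Type*} [PseudoMetricSpace E]
    [TopologicalSpace.SeparableSpace E] {f : Y → α → E} (hf : ∀ a, Continuous fun y => f y a) :
    IsGδ {y | DenseRange (f y)} := by
  obtain ⟨D, hDc, hD⟩ := TopologicalSpace.exists_countable_dense E
  have hdense : ∀ g : α → E, DenseRange g ↔ ∀ d ∈ D, d ∈ closure (range g) := fun g =>
    ⟨fun hg d _ => hg.closure_range ▸ mem_univ d,
      fun h => dense_closure.1 (hD.mono h)⟩
  simp only [hdense, Metric.mem_closure_range_iff_nat, ofPred_forall, ofPred_exists]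
  exact .biInter hDc fun d _ => .iInter_of_isOpen fun n => isOpen_iUnion fun a =>
    isOpen_lt (continuous_const.dist (hf a)) continuous_const

variable {𝕜 X : Type*} [NontriviallyNormedField 𝕜] [NormedAddCommGroup X] [NormedSpace 𝕜 X]

theorem isClosed_setOf_boundedBelow {F : Y → X →L[𝕜] X} (hF : ∀ x, Continuous fun y => F y x)
    (c : ℝ) : IsClosed {y | ∀ x, c * ‖x‖ ≤ ‖F y x‖} := by
  simp only [ofPred_forall]
  exact isClosed_iInter fun x => isClosed_le continuous_const (hF x).norm

variable [MeasurableSpace Y] [OpensMeasurableSpace Y] [TopologicalSpace.SeparableSpace X]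

theorem measurableSet_setOf_boundedBelowDenseRange {F : Y → X →L[𝕜] X}
    (hF : ∀ x, Continuous fun y => F y x) (c : ℝ) :
    MeasurableSet {y | BoundedBelowDenseRange c (F y)} :=
  (isClosed_setOf_boundedBelow hF c).measurableSet.inter (isGδ_setOf_denseRange hF).measurableSet

variable [CompleteSpace X]

theorem measurableSet_setOf_spectrum_inter_nonempty_of_isCompact {F : Y → X →L[𝕜] X}
    (hF : ∀ x, Continuous fun y => F y x) {K : Set 𝕜} (hK : IsCompact K) :
    MeasurableSet {y | (spectrum 𝕜 (F y) ∩ K).Nonempty} := by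
  obtain ⟨K₀, hK₀, hK₀c, hK₀_dense⟩ := hK.isSeparable.exists_countable_dense_subset
  have hshift : ∀ μ : 𝕜, ∀ x, Continuous fun y => (algebraMap 𝕜 (X →L[𝕜] X) μ - F y) x :=
    fun μ x => continuous_const.sub (hF x)
  simp only [← not_disjoint_iff_nonempty_inter,
    ContinuousLinearMap.disjoint_spectrum_iff_exists_boundedBelowDenseRange hK hK₀ hK₀_dense,
    ← compl_ofPred, ofPred_exists, ofPred_forall]
  exact .compl <| .iUnion fun n => .biInter hK₀c fun μ _ =>
    measurableSet_setOf_boundedBelowDenseRange (hshift μ) _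

theorem measurableSet_setOf_spectrum_inter_nonempty_of_isSigmaCompact {F : Y → X →L[𝕜] X}
    (hF : ∀ x, Continuous fun y => F y x) {s : Set 𝕜} (hs : IsSigmaCompact s) :
    MeasurableSet {y | (spectrum 𝕜 (F y) ∩ s).Nonempty} := by
  obtain ⟨K, hK, rfl⟩ := hs
  simp only [inter_iUnion, nonempty_iUnion, ofPred_exists]
  exact .iUnion fun n => measurableSet_setOf_spectrum_inter_nonempty_of_isCompact hF (hK n)

end Measurability

theorem IsCompact.isSigmaCompact_inter_of_isOpen {α : Type*} [PseudoEMetricSpace α]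
    {K U : Set α} (hK : IsCompact K) (hU : IsOpen U) : IsSigmaCompact (K ∩ U) := by
  obtain ⟨F, hF, -, hFU, -⟩ := hU.exists_iUnion_isClosed
  exact ⟨fun n => K ∩ F n, fun n => hK.inter_right (hF n), by rw [← inter_iUnion, hFU]⟩

theorem continuous_apply_SOT {𝕜 X : Type*} [NontriviallyNormedField 𝕜] [NormedAddCommGroup X]
    [NormedSpace 𝕜 X] (x : X) : Continuous[SOT 𝕜 X, _] fun T : X →L[𝕜] X => T x :=
  @Continuous.comp _ _ _ (SOT 𝕜 X) _ _ _ _ (continuous_apply x) continuous_induced_dom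

def KD.toCompacts (K : KD) : TopologicalSpace.Compacts ℂ := ⟨K.1, K.2.1⟩

theorem vietoris_eq_induced_toCompacts : vietoris = .induced KD.toCompacts inferInstance := by
  rw [TopologicalSpace.Compacts.topology, induced_compose, TopologicalSpace.vietoris,
    induced_generateFrom_eq, vietoris, image_union, image_image, image_image]
  congr 1
  ext s
  simp only [mem_union, mem_image, mem_ofPred_eq, eq_comm (a := s)]
  rfl

theorem secondCountableTopology_vietoris : @SecondCountableTopology KD vietoris :=
  vietoris_eq_induced_toCompacts ▸
    TopologicalSpace.secondCountableTopology_induced KD _ KD.toCompacts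

theorem borel_vietoris_eq_generateFrom :
    @borel KD vietoris = .generateFrom
      ({s : Set KD | ∃ U : Set ℂ, IsOpen U ∧ s = {K : KD | (K : Set ℂ) ⊆ U}} ∪
        {s : Set KD | ∃ U : Set ℂ, IsOpen U ∧ s = {K : KD | ((K : Set ℂ) ∩ U).Nonempty}}) :=
  @borel_eq_generateFrom_of_subbasis _ _ vietoris secondCountableTopology_vietoris rfl

/-- The spectrum map `σ : L(X) → K(D)` is Borel from the strong operator
topology to the Vietoris topology; equivalently, each set
`E_V = {T : σ(T) ∩ V ≠ ∅}` is Borel in `(L(X), SOT)`. -/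
theorem spectrum_map_borel
    {X : Type*} [NormedAddCommGroup X] [NormedSpace ℂ X] [CompleteSpace X]
    [TopologicalSpace.SeparableSpace X] :
    @Measurable (X →L[ℂ] X) KD (@borel _ (SOT ℂ X)) (@borel _ vietoris) sigmaD ∧
    ∀ V : Set ℂ, V ⊆ closedBall (0 : ℂ) 1 →
      (∃ U : Set ℂ, IsOpen U ∧ V = U ∩ closedBall (0 : ℂ) 1) →
      @MeasurableSet (X →L[ℂ] X) (@borel _ (SOT ℂ X))
        {T : X →L[ℂ] X | (spectrum ℂ T ∩ closedBall (0 : ℂ) 1 ∩ V).Nonempty} := by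
  let := SOT ℂ X
  let : MeasurableSpace (X →L[ℂ] X) := borel _
  have : BorelSpace (X →L[ℂ] X) := ⟨rfl⟩
  have hits {s : Set ℂ} (hs : IsSigmaCompact s) :
      MeasurableSet {T : X →L[ℂ] X | (spectrum ℂ T ∩ s).Nonempty} :=
    measurableSet_setOf_spectrum_inter_nonempty_of_isSigmaCompact (F := id) continuous_apply_SOT hs
  have hits_closedBall {U : Set ℂ} (hU : IsOpen U) :
      MeasurableSet {T : X →L[ℂ] X | (spectrum ℂ T ∩ closedBall 0 1 ∩ U).Nonempty} := by
    simpa only [inter_assoc] using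
      hits ((isCompact_closedBall 0 1).isSigmaCompact_inter_of_isOpen hU)
  refine ⟨?_, fun V _ ⟨U, hU, hV⟩ => ?_⟩
  · rw [borel_vietoris_eq_generateFrom]
    refine measurable_generateFrom ?_
    rintro _ (⟨U, hU, rfl⟩ | ⟨U, hU, rfl⟩)
    · have hD_diff : IsCompact (closedBall (0 : ℂ) 1 ∩ Uᶜ) :=
        (isCompact_closedBall 0 1).inter_right (hU : IsOpen U).isClosed_compl
      convert (hits hD_diff.isSigmaCompact).compl using 1
      ext T
      simp [sigmaD, subset_def, not_nonempty_iff_eq_empty, eq_empty_iff_forall_notMem]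
    · exact hits_closedBall hU
  · have hDU (S : Set ℂ) :
        S ∩ closedBall 0 1 ∩ (U ∩ closedBall 0 1) = S ∩ closedBall 0 1 ∩ U := by
      rw [inter_comm U, ← inter_assoc, inter_assoc S, inter_self]
    simpa only [hV, hDU] using hits_closedBall hU
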